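/- (At a generic cocharacter, bounded coincides with bounded-and-proper.) Let W ⊆ ℝ^E be a linear subspace and z ∈ ℝ^E a parameter such that ⟨z, χ⟩ ≠ 0 for every cocircuit χ (i.e. every circuit of Wᗮ). Then for every sign vector α : E → {+1,−1}: the functional u ↦ ⟨z,u⟩ is bounded above on the cone C_α := { u ∈ Wᗮ : α(e)·u(e) ≥ 0 for all e ∈ E } if and only if ⟨z, u⟩ < 0 for every nonzero u ∈ C_α (equivalently, ⟨z,·⟩ is bounded above and proper on C_α). -/

import Mathlib

/-- The standard inner product on `ℝ^E`. -/
noncomputable def dot {E : Type*} [Fintype E] (x y : E → ℝ) : ℝ := ∑ e, x e * y e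

/-- The orthogonal complement of a subspace `W ⊆ ℝ^E` with respect to the
standard inner product. -/
def perp {E : Type*} [Fintype E] (W : Submodule ℝ (E → ℝ)) : Set (E → ℝ) :=
  {u | ∀ w ∈ W, dot w u = 0}

/-- The cone `C_α := { u ∈ Wᗮ : α e * u e ≥ 0 for all e }`. -/
def cone {E : Type*} [Fintype E] (W : Submodule ℝ (E → ℝ)) (α : E → ℝ) : Set (E → ℝ) :=
  {u | u ∈ perp W ∧ ∀ e, 0 ≤ α e * u e}

/-- A circuit of a subset `U ⊆ ℝ^E` is a nonzero element of `U` whose support is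
minimal under inclusion among supports of nonzero elements of `U`. -/
def IsCircuit {E : Type*} [Fintype E] (U : Set (E → ℝ)) (u : E → ℝ) : Prop :=
  u ∈ U ∧ u ≠ 0 ∧
    ∀ w ∈ U, w ≠ 0 → {e | w e ≠ 0} ⊆ {e | u e ≠ 0} → {e | w e ≠ 0} = {e | u e ≠ 0}

/-! If `⟨z, ·⟩` is bounded above on the cone `C_α`, it is nonpositive there, since `C_α` is closed
under nonnegative scaling. Suppose `⟨z, u⟩ = 0` for some nonzero `u ∈ C_α`, so that `u` maximizes
`⟨z, ·⟩` on `C_α`, and pick a cocircuit `χ` whose support lies in that of `u`. For small `t` of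
either sign `u + t χ` stays in `C_α`, so `t ↦ ⟨z, u + t χ⟩ = t ⟨z, χ⟩` has a local maximum at `0`.
This forces `⟨z, χ⟩ = 0`, contradicting genericity. -/

open Filter Topology

section Cone

variable {E : Type*} [Fintype E] {W : Submodule ℝ (E → ℝ)} {α : E → ℝ}

lemma dot_eq_dotProduct (x y : E → ℝ) : dot x y = x ⬝ᵥ y := rfl

lemma zero_mem_perp : (0 : E → ℝ) ∈ perp W := fun w _ => by simp [dot_eq_dotProduct]

lemma add_smul_mem_perp {u v : E → ℝ} (hu : u ∈ perp W) (hv : v ∈ perp W) (t : ℝ) :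
    u + t • v ∈ perp W := fun w hw => by
  rw [dot_eq_dotProduct, dotProduct_add, dotProduct_smul]
  simp [← dot_eq_dotProduct, hu w hw, hv w hw]

lemma smul_mem_cone {u : E → ℝ} (hu : u ∈ cone W α) {t : ℝ} (ht : 0 ≤ t) :
    t • u ∈ cone W α := by
  refine ⟨by simpa using add_smul_mem_perp zero_mem_perp hu.1 t, fun e => ?_⟩
  simpa [mul_left_comm] using mul_nonneg ht (hu.2 e)

lemma dot_nonpos_of_bddAbove {z u : E → ℝ} (hb : BddAbove ((fun v => dot z v) '' cone W α))
    (hu : u ∈ cone W α) : dot z u ≤ 0 := by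
  obtain ⟨b, hb⟩ := hb
  by_contra! hpos
  have hscaled : ∀ t : ℝ, 0 ≤ t → t * dot z u ≤ b := fun t ht => by
    simpa [dot_eq_dotProduct, dotProduct_smul] using hb ⟨_, smul_mem_cone hu ht, rfl⟩
  have := hscaled ((|b| + 1) / dot z u) (by positivity)
  rw [div_mul_cancel₀ _ hpos.ne'] at this
  linarith [le_abs_self b]

lemma eventually_add_smul_mem_cone {u χ : E → ℝ} (hu : u ∈ cone W α) (hχ : χ ∈ perp W)
    (hsupp : {e | χ e ≠ 0} ⊆ {e | u e ≠ 0}) : ∀ᶠ t in 𝓝 (0 : ℝ), u + t • χ ∈ cone W α := by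
  have hcoord : ∀ e, ∀ᶠ t in 𝓝 (0 : ℝ), 0 ≤ α e * (u + t • χ) e := by
    intro e
    rcases (hu.2 e).lt_or_eq with hpos | hzero
    · have hcont : Continuous fun t : ℝ => α e * (u + t • χ) e := by fun_prop
      exact ((hcont.tendsto 0).eventually (lt_mem_nhds (by simpa using hpos))).mono
        fun _ => le_of_lt
    · have hαχ : α e * χ e = 0 := by
        rcases mul_eq_zero.1 hzero.symm with hα | hu0
        · simp [hα]
        · simp [not_imp_not.1 (@hsupp e) hu0]
      exact Eventually.of_forall fun t => by
        simp [mul_add, mul_left_comm, hαχ, hu.2 e]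
  filter_upwards [eventually_all.2 hcoord] with t ht
  exact ⟨add_smul_mem_perp hu.1 hχ t, ht⟩

lemma dot_eq_zero_of_isMaxOn_cone {z u χ : E → ℝ} (hmax : IsMaxOn (dot z) (cone W α) u)
    (hu : u ∈ cone W α) (hχ : χ ∈ perp W) (hsupp : {e | χ e ≠ 0} ⊆ {e | u e ≠ 0}) :
    dot z χ = 0 := by
  have hloc : IsLocalMax (fun t : ℝ => dot z (u + t • χ)) 0 := by
    filter_upwards [eventually_add_smul_mem_cone hu hχ hsupp] with t ht
    simpa using isMaxOn_iff.1 hmax _ ht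
  have hderiv : HasDerivAt (fun t : ℝ => dot z (u + t • χ)) (dot z χ) 0 := by
    simp only [dot_eq_dotProduct, dotProduct_add, dotProduct_smul, smul_eq_mul]
    simpa using ((hasDerivAt_id (0 : ℝ)).mul_const (z ⬝ᵥ χ)).const_add (z ⬝ᵥ u)
  exact hloc.hasDerivAt_eq_zero hderiv

end Cone

lemma exists_isCircuit_support_subset {E : Type*} [Fintype E] {U : Set (E → ℝ)} {u : E → ℝ}
    (hu : u ∈ U) (hu0 : u ≠ 0) : ∃ χ, IsCircuit U χ ∧ {e | χ e ≠ 0} ⊆ {e | u e ≠ 0} := by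
  classical
  have hP : ∃ n, ∃ w ∈ U, w ≠ 0 ∧ {e | w e ≠ 0} ⊆ {e | u e ≠ 0} ∧ {e | w e ≠ 0}.ncard = n :=
    ⟨_, u, hu, hu0, subset_rfl, rfl⟩
  obtain ⟨w, hwU, hw0, hwsub, hwcard⟩ := Nat.find_spec hP
  refine ⟨w, ⟨hwU, hw0, fun v hvU hv0 hvsub => ?_⟩, hwsub⟩
  have hle : Nat.find hP ≤ {e | v e ≠ 0}.ncard :=
    Nat.find_le ⟨v, hvU, hv0, hvsub.trans hwsub, rfl⟩
  exact Set.eq_of_subset_of_ncard_le hvsub (by omega) (Set.toFinite _)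

theorem bounded_iff_strict_negative_of_generic_general {E : Type*} [Fintype E]
    (W : Submodule ℝ (E → ℝ)) (z : E → ℝ)
    (hgen : ∀ χ : E → ℝ, IsCircuit (perp W) χ → dot z χ ≠ 0)
    (α : E → ℝ) :
    BddAbove ((fun u => dot z u) '' cone W α) ↔
      ∀ u ∈ cone W α, u ≠ 0 → dot z u < 0 := by
  constructor
  · intro hb u hu hu0
    refine (dot_nonpos_of_bddAbove hb hu).lt_of_ne fun hzu => ?_
    have hmax : IsMaxOn (dot z) (cone W α) u :=
      isMaxOn_iff.2 fun v hv => hzu ▸ dot_nonpos_of_bddAbove hb hv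
    obtain ⟨χ, hχ, hsupp⟩ := exists_isCircuit_support_subset hu.1 hu0
    exact hgen χ hχ (dot_eq_zero_of_isMaxOn_cone hmax hu hχ.1 hsupp)
  · intro hneg
    refine ⟨0, ?_⟩
    rintro _ ⟨u, hu, rfl⟩
    rcases eq_or_ne u 0 with rfl | hu0
    · simp [dot]
    · exact (hneg u hu hu0).le

/-- At a generic cocharacter `z` (i.e. `⟨z, χ⟩ ≠ 0` for every cocircuit `χ`,
that is, every circuit of `Wᗮ`), `⟨z, ·⟩` is bounded above on the cone `C_α`
iff `⟨z, u⟩ < 0` for every nonzero `u ∈ C_α`. -/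
theorem bounded_iff_strict_negative_of_generic {E : Type*} [Fintype E]
    (W : Submodule ℝ (E → ℝ)) (z : E → ℝ)
    (hgen : ∀ χ : E → ℝ, IsCircuit (perp W) χ → dot z χ ≠ 0)
    (α : E → ℝ) (hα : ∀ e, α e = 1 ∨ α e = -1) :
    BddAbove ((fun u => dot z u) '' cone W α) ↔
      ∀ u ∈ cone W α, u ≠ 0 → dot z u < 0 :=
  bounded_iff_strict_negative_of_generic_general W z hgen α
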